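/- The group PSL(3, 𝔽_3) contains a metacyclic subgroup isomorphic to a semidirect product ℤ/13 ⋊ ℤ/3 with faithful action: there exist an injective group homomorphism φ from ℤ/3 into the automorphism group of ℤ/13, and an injective group homomorphism from the semidirect product (ℤ/13) ⋊_φ (ℤ/3) into PSL(3, 𝔽_3). -/

import Mathlib

/-!
Identify `𝔽₃³` with `𝔽₂₇ = 𝔽₃[x]/(x³ - x - 1)`. Multiplication by `x` is a matrix
`A ∈ SL(3, 𝔽₃)` of order 13 (a Singer cycle), and the Frobenius `y ↦ y³` is a matrix `B` of
order 3 with `B A B⁻¹ = A³`. Since `3` has order 3 in `(ℤ/13)ˣ`, `A` and `B` give a homomorphism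
from `ℤ/13 ⋊ ℤ/3`, injective because the orders 13 and 3 are coprime. Finally
`SL(3, 𝔽₃) = PSL(3, 𝔽₃)`: a central element is a scalar `r` with `r³ = 1`, and
`(r - 1)³ = r³ - 1 = 0` in characteristic 3.
-/

/-- The projective special linear group `PSL(n, F)`: the quotient of `SL(n, F)` by its center. -/
abbrev PSL (n : ℕ) (F : Type) [Field F] :=
  Matrix.SpecialLinearGroup (Fin n) F ⧸ Subgroup.center (Matrix.SpecialLinearGroup (Fin n) F)

open Multiplicative

section ZModPowHom

variable {G : Type*} [Group G] {n : ℕ} {a : G}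

def zmodPowHom (ha : a ^ n = 1) : Multiplicative (ZMod n) →* G :=
  AddMonoidHom.toMultiplicativeLeft
    (ZMod.lift n ⟨zmultiplesHom (Additive G) (Additive.ofMul a), by simp [← ofMul_pow, ha]⟩)

theorem zmodPowHom_ofAdd_intCast (ha : a ^ n = 1) (k : ℤ) :
    zmodPowHom ha (ofAdd (k : ZMod n)) = a ^ k := by
  simp [zmodPowHom, ZMod.lift_coe]

theorem zmodPowHom_ofAdd_natCast (ha : a ^ n = 1) (k : ℕ) :
    zmodPowHom ha (ofAdd (k : ZMod n)) = a ^ k := by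
  simpa using zmodPowHom_ofAdd_intCast ha k

theorem zmodPowHom_injective (ha : a ^ n = 1) (hn : orderOf a = n) :
    Function.Injective (zmodPowHom ha) := by
  rw [injective_iff_map_eq_one]
  intro x hx
  obtain ⟨k, hk⟩ := ZMod.intCast_surjective (toAdd x)
  rw [← ofAdd_toAdd x, ← hk] at hx ⊢
  rw [zmodPowHom_ofAdd_intCast, ← orderOf_dvd_iff_zpow_eq_one, hn,
    ← ZMod.intCast_zmod_eq_zero_iff_dvd] at hx
  rw [hx, ofAdd_zero]

end ZModPowHom

def unitsMulAut (R : Type*) [Ring R] : Rˣ →* MulAut (Multiplicative R) :=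
  (MulAutMultiplicative R).symm.toMonoidHom.comp AddAut.mulLeft

@[simp]
theorem unitsMulAut_apply {R : Type*} [Ring R] (u : Rˣ) (x : Multiplicative R) :
    unitsMulAut R u x = ofAdd (u * toAdd x) :=
  rfl

theorem unitsMulAut_injective (R : Type*) [Ring R] : Function.Injective (unitsMulAut R) := by
  rw [injective_iff_map_eq_one]
  intro u hu
  simpa using congrArg (fun f => toAdd (f (ofAdd 1))) hu

theorem SemiconjBy.pow_pow_of_pow {M : Type*} [Monoid M] {a b : M} {k : ℕ}
    (h : SemiconjBy b a (a ^ k)) (j m : ℕ) : SemiconjBy (b ^ j) (a ^ m) (a ^ (k ^ j * m)) := by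
  induction j generalizing m with
  | zero => simp
  | succ j ih =>
    rw [pow_succ', pow_succ', mul_assoc, pow_mul a k]
    exact (h.pow_right _).mul_left (ih m)

namespace SemidirectProduct

variable {N G H : Type*} [Group N] [Group G] [Group H] {φ : G →* MulAut N}
  (fn : N →* H) (fg : G →* H)
  (h : ∀ g, fn.comp (φ g).toMonoidHom = (MulAut.conj (fg g)).toMonoidHom.comp fn)

theorem lift_injective (hn : Function.Injective fn) (hg : Function.Injective fg)
    (hdisj : Disjoint fn.range fg.range) : Function.Injective (lift fn fg h) := by
  rw [injective_iff_map_eq_one]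
  rintro ⟨n, g⟩ hng
  change fn n * fg g = 1 at hng
  have hfn : fn n = 1 := by
    refine Subgroup.disjoint_def.mp hdisj ⟨n, rfl⟩ ?_
    rw [eq_inv_of_mul_eq_one_left hng]
    exact inv_mem ⟨g, rfl⟩
  rw [hfn, one_mul] at hng
  ext
  · exact (map_eq_one_iff fn hn).mp hfn
  · exact (map_eq_one_iff fg hg).mp hng

theorem lift_injective_of_coprime (hn : Function.Injective fn) (hg : Function.Injective fg)
    (hcard : (Nat.card N).Coprime (Nat.card G)) : Function.Injective (lift fn fg h) := by
  refine lift_injective fn fg h hn hg (Subgroup.disjoint_of_coprime_natCard ?_)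
  rwa [← Nat.card_congr (MonoidHom.ofInjective hn).toEquiv,
    ← Nat.card_congr (MonoidHom.ofInjective hg).toEquiv]

end SemidirectProduct

section Metacyclic

variable {p q : ℕ} {u : (ZMod p)ˣ}

def unitPowAction (hu : u ^ q = 1) :
    Multiplicative (ZMod q) →* MulAut (Multiplicative (ZMod p)) :=
  (unitsMulAut (ZMod p)).comp (zmodPowHom hu)

theorem unitPowAction_injective (hu : u ^ q = 1) (hq : orderOf u = q) :
    Function.Injective (unitPowAction hu) :=
  (unitsMulAut_injective _).comp (zmodPowHom_injective hu hq)

variable {G : Type*} [Group G] {a b : G} [NeZero p] [NeZero q]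

theorem zmodPowHom_comp_unitPowAction (hu : u ^ q = 1) (ha : a ^ p = 1) (hb : b ^ q = 1)
    (hab : b * a * b⁻¹ = a ^ (u : ZMod p).val) (g : Multiplicative (ZMod q)) :
    (zmodPowHom ha).comp (unitPowAction hu g).toMonoidHom =
      (MulAut.conj (zmodPowHom hb g)).toMonoidHom.comp (zmodPowHom ha) := by
  have hconj : SemiconjBy b a (a ^ (u : ZMod p).val) := mul_inv_eq_iff_eq_mul.mp hab
  refine MonoidHom.ext fun x => ?_
  obtain ⟨j, hj⟩ := ZMod.natCast_zmod_surjective (toAdd g)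
  obtain ⟨m, hm⟩ := ZMod.natCast_zmod_surjective (toAdd x)
  rw [← ofAdd_toAdd g, ← ofAdd_toAdd x, ← hj, ← hm]
  simp only [MonoidHom.comp_apply, MulEquiv.coe_toMonoidHom, MulAut.conj_apply, unitPowAction,
    unitsMulAut_apply, zmodPowHom_ofAdd_natCast, toAdd_ofAdd, Units.val_pow_eq_pow_val]
  rw [← ZMod.natCast_zmod_val (u : ZMod p), ← Nat.cast_pow, ← Nat.cast_mul,
    zmodPowHom_ofAdd_natCast]
  exact (mul_inv_eq_of_eq_mul (hconj.pow_pow_of_pow j m).eq).symm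

def metacyclicHom (hu : u ^ q = 1) (ha : a ^ p = 1) (hb : b ^ q = 1)
    (hab : b * a * b⁻¹ = a ^ (u : ZMod p).val) :
    Multiplicative (ZMod p) ⋊[unitPowAction hu] Multiplicative (ZMod q) →* G :=
  SemidirectProduct.lift (zmodPowHom ha) (zmodPowHom hb)
    (zmodPowHom_comp_unitPowAction hu ha hb hab)

theorem metacyclicHom_injective (hu : u ^ q = 1) (ha : a ^ p = 1) (hb : b ^ q = 1)
    (hab : b * a * b⁻¹ = a ^ (u : ZMod p).val) (hpq : p.Coprime q) (hpa : orderOf a = p)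
    (hqb : orderOf b = q) : Function.Injective (metacyclicHom hu ha hb hab) :=
  SemidirectProduct.lift_injective_of_coprime _ _ _ (zmodPowHom_injective ha hpa)
    (zmodPowHom_injective hb hqb) (by simpa using hpq)

end Metacyclic

theorem Matrix.SpecialLinearGroup.center_eq_bot_of_charP {n R : Type*} [Fintype n]
    [DecidableEq n] [CommRing R] [IsReduced R] (p : ℕ) [Fact p.Prime] [CharP R p]
    (hn : Fintype.card n = p) : Subgroup.center (SpecialLinearGroup n R) = ⊥ := by
  refine (Subgroup.eq_bot_iff_forall _).mpr fun A hA => ?_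
  obtain ⟨r, hr, hrA⟩ := mem_center_iff.mp hA
  have hr1 : r - 1 = 0 :=
    IsReduced.eq_zero _ ⟨p, by rw [sub_pow_char, ← hn, hr, one_pow, sub_self]⟩
  ext : 1
  rw [← hrA, sub_eq_zero.mp hr1, map_one, coe_one]

namespace PSL33

open Matrix

/-- Multiplication by `x` on `𝔽₃[x]/(x³ - x - 1)`, in the basis `1, x, x²`. -/
def singerCycle : SpecialLinearGroup (Fin 3) (ZMod 3) :=
  ⟨!![0, 0, 1; 1, 0, 1; 0, 1, 0], by decide⟩

/-- The Frobenius `y ↦ y³` of `𝔽₃[x]/(x³ - x - 1)`, in the basis `1, x, x²`. -/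
def frobenius : SpecialLinearGroup (Fin 3) (ZMod 3) :=
  ⟨!![1, 1, 1; 0, 1, 2; 0, 0, 1], by decide⟩

def three : (ZMod 13)ˣ :=
  ZMod.unitOfCoprime 3 (by norm_num)

theorem three_pow_three : three ^ 3 = 1 := by decide

theorem singerCycle_pow : singerCycle ^ 13 = 1 := by decide

theorem frobenius_pow : frobenius ^ 3 = 1 := by decide

theorem frobenius_conj_singerCycle :
    frobenius * singerCycle * frobenius⁻¹ = singerCycle ^ (three : ZMod 13).val := by
  decide

theorem orderOf_three : orderOf three = 3 :=
  orderOf_eq_prime three_pow_three (by decide)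

theorem orderOf_singerCycle : orderOf singerCycle = 13 :=
  have : Fact (Nat.Prime 13) := ⟨by norm_num⟩
  orderOf_eq_prime singerCycle_pow (by decide)

theorem orderOf_frobenius : orderOf frobenius = 3 :=
  orderOf_eq_prime frobenius_pow (by decide)

end PSL33

open PSL33 in
/-- The group `PSL(3, 𝔽_3)` contains a metacyclic subgroup isomorphic to a semidirect product
`ℤ/13 ⋊ ℤ/3` with faithful action. -/
theorem psl_three_three_contains_metacyclic :
    ∃ (φ : Multiplicative (ZMod 3) →* MulAut (Multiplicative (ZMod 13)))
      (ψ : (Multiplicative (ZMod 13)) ⋊[φ] (Multiplicative (ZMod 3)) →* PSL 3 (ZMod 3)),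
      Function.Injective φ ∧ Function.Injective ψ := by
  have hmk : Function.Injective
      (QuotientGroup.mk' (Subgroup.center (Matrix.SpecialLinearGroup (Fin 3) (ZMod 3)))) := by
    rw [← MonoidHom.ker_eq_bot_iff, QuotientGroup.ker_mk',
      Matrix.SpecialLinearGroup.center_eq_bot_of_charP 3 (Fintype.card_fin 3)]
  have hψ := metacyclicHom_injective three_pow_three singerCycle_pow frobenius_pow
    frobenius_conj_singerCycle (by norm_num) orderOf_singerCycle orderOf_frobenius
  exact ⟨_, (QuotientGroup.mk' _).comp (metacyclicHom _ _ _ _),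
    unitPowAction_injective three_pow_three orderOf_three, hmk.comp hψ⟩
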